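/- Assume π₀ is f-invariant, let P = {P₁,…,P_r} be a finite Borel partition of X with h = h_{π₀}(f;P), fix δ > 0, and define sampling times τ₀ = 0 and τ_{j+1} = τ_j + j + 1 for j ≥ 0. If Σ_{j=0}^∞ π₀({x ∈ X : |−(1/j) log π₀(P^j(x)) − h| > δ}) < ∞ (which holds in particular when limsup_{n→∞} (1/n) log π₀({x : |−(1/n) log π₀(Pⁿ(x)) − h| > δ}) < 0), then π₀({x ∈ X : there exists j₀ such that i^j(f^{τ_j}(x)) ∈ Σ_{j,δ} for all j ≥ j₀}) = 1. -/
import Mathlib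


open MeasureTheory Filter Set

/-- A finite Borel partition of `X`, indexed by `Fin r`. -/
def IsPartition {X : Type*} [MeasurableSpace X] {r : ℕ} (P : Fin r → Set X) : Prop :=
  (∀ i, MeasurableSet (P i)) ∧ (Pairwise fun i j => Disjoint (P i) (P j)) ∧
    (⋃ i, P i) = Set.univ

/-- The cell of the refined partition `Pⁿ = ⋁_{i<n} f^{-i} P` with itinerary word `a`. -/
def cell {X : Type*} (f : X → X) {r n : ℕ} (P : Fin r → Set X) (a : Fin n → Fin r) : Set X :=
  ⋂ i : Fin n, f^[(i : ℕ)] ⁻¹' P (a i)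

/-- `H_μ(Pⁿ) = -∑ μ(cell) log₂ μ(cell)`, the entropy of the partition `Pⁿ`. -/
noncomputable def partEnt {X : Type*} [MeasurableSpace X] (μ : Measure X) (f : X → X)
    {r : ℕ} (P : Fin r → Set X) (n : ℕ) : ℝ :=
  ∑ a : Fin n → Fin r, -((μ (cell f P a)).toReal * Real.logb 2 (μ (cell f P a)).toReal)

/-- `h_μ(f;P) = lim_{n→∞} (1/n) H_μ(Pⁿ)` (the limit exists by subadditivity and
equals the limsup). -/
noncomputable def entP {X : Type*} [MeasurableSpace X] (μ : Measure X) (f : X → X)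
    {r : ℕ} (P : Fin r → Set X) : EReal :=
  limsup (fun n : ℕ => ((partEnt μ f P n / n : ℝ) : EReal)) atTop

/-- The metric (measure-theoretic) entropy `h_μ(f) = sup_P h_μ(f;P)`, the supremum
over all finite Borel partitions. -/
noncomputable def metEnt {X : Type*} [MeasurableSpace X] (μ : Measure X) (f : X → X) : EReal :=
  ⨆ (r : ℕ) (P : Fin r → Set X) (_ : IsPartition P), entP μ f P
/-- `Pⁿ(x)`: the element of the refined partition `Pⁿ` containing `x`
(for a partition `P`, `y ∈ Pⁿ(x)` iff for all `i < n`, `f^i x` and `f^i y` lie in a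
common member of `P`). -/
def cellOf {X : Type*} (f : X → X) {r : ℕ} (P : Fin r → Set X) (n : ℕ) (x : X) : Set X :=
  {y | ∀ i < n, ∃ j, f^[i] x ∈ P j ∧ f^[i] y ∈ P j}
/-- `a ∈ Σ_{n,ε}`: the itinerary word `a` satisfies
`2^{-n(h+ε)} ≤ μ({x : iⁿ(x) = a}) ≤ 2^{-n(h-ε)}`. -/
def inSigma {X : Type*} [MeasurableSpace X] (μ : Measure X) (f : X → X) {r : ℕ}
    (P : Fin r → Set X) (h ε : ℝ) (n : ℕ) (a : Fin n → Fin r) : Prop :=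
  ENNReal.ofReal ((2 : ℝ) ^ (-(n : ℝ) * (h + ε))) ≤ μ (cell f P a) ∧
    μ (cell f P a) ≤ ENNReal.ofReal ((2 : ℝ) ^ (-(n : ℝ) * (h - ε)))

section Aux
variable {X : Type*} [MeasurableSpace X] {r : ℕ} {f : X → X} {P : Fin r → Set X}

lemma part_unique (hP : IsPartition P) {y : X} {k l : Fin r}
    (hk : y ∈ P k) (hl : y ∈ P l) : k = l := by
  by_contra hne
  exact Set.disjoint_left.mp (hP.2.1 hne) hk hl

lemma exists_itin (hP : IsPartition P) (n : ℕ) (x : X) :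
    ∃ a : Fin n → Fin r, x ∈ cell f P a := by
  have hcov : ∀ y : X, ∃ k, y ∈ P k := fun y =>
    Set.mem_iUnion.mp (hP.2.2 ▸ Set.mem_univ y)
  exact ⟨fun i => (hcov (f^[(i : ℕ)] x)).choose,
    Set.mem_iInter.mpr fun i => (hcov (f^[(i : ℕ)] x)).choose_spec⟩

lemma cellOf_eq_cell (hP : IsPartition P) {n : ℕ} {x : X} {a : Fin n → Fin r}
    (hx : x ∈ cell f P a) : cellOf f P n x = cell f P a := by
  have hx' : ∀ i : Fin n, f^[(i : ℕ)] x ∈ P (a i) := fun i =>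
    Set.mem_preimage.mp (Set.mem_iInter.mp hx i)
  ext z
  simp only [cellOf, cell, Set.mem_iInter, Set.mem_setOf_eq, Set.mem_preimage]
  constructor
  · intro hz i
    obtain ⟨k, hxk, hzk⟩ := hz i i.isLt
    exact (part_unique hP hxk (hx' i)) ▸ hzk
  · intro hz i hi
    exact ⟨a ⟨i, hi⟩, hx' ⟨i, hi⟩, hz ⟨i, hi⟩⟩

end Aux

/-- Assume `π₀` is `f`-invariant, `P = {P₁,…,P_r}` is a finite Borel
partition with `h = h_{π₀}(f;P)`, `δ > 0`, and the sampling times are `τ_j = j(j+1)/2`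
(so `τ₀ = 0`, `τ_{j+1} = τ_j + j + 1`). If
`∑_j π₀({x : |-(1/j) log₂ π₀(P^j(x)) - h| > δ}) < ∞`, then almost every `x` satisfies
`i^j(f^{τ_j}(x)) ∈ Σ_{j,δ}` for all sufficiently large `j`. -/
theorem stmt13 {X : Type*} [MetricSpace X] [CompactSpace X] [MeasurableSpace X] [BorelSpace X]
    (f : X ≃ₜ X) (π₀ : Measure X) [IsProbabilityMeasure π₀]
    (hinv : MeasurePreserving (⇑f) π₀ π₀)
    {r : ℕ} (P : Fin r → Set X) (hP : IsPartition P)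
    (h : ℝ) (hh : Tendsto (fun n : ℕ => partEnt π₀ (⇑f) P n / n) atTop (nhds h))
    (δ : ℝ) (hδ : 0 < δ)
    (hsum : (∑' j : ℕ,
      π₀ {x | δ < |(-(Real.logb 2 (π₀ (cellOf (⇑f) P j x)).toReal) / j) - h|}) < ⊤) :
    π₀ {x | ∃ j₀ : ℕ, ∀ j, j₀ ≤ j → ∃ a : Fin j → Fin r,
      inSigma π₀ (⇑f) P h δ j a ∧ (⇑f)^[j * (j + 1) / 2] x ∈ cell (⇑f) P a} = 1 := by
  have hmf : Measurable (⇑f) := f.continuous.measurable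
  have hcellMeas : ∀ {n : ℕ} (a : Fin n → Fin r), MeasurableSet (cell (⇑f) P a) := by
    intro n a
    exact MeasurableSet.iInter fun i => (hmf.iterate (i : ℕ)) (hP.1 (a i))
  set τ : ℕ → ℕ := fun j => j * (j + 1) / 2 with hτ
  set B : ℕ → Set X := fun j =>
    {x | δ < |(-(Real.logb 2 (π₀ (cellOf (⇑f) P j x)).toReal) / j) - h|} with hB
  -- B j as a finite union of cells
  have hBeq : ∀ j, B j = ⋃ (a : Fin j → Fin r)
      (_ : δ < |(-(Real.logb 2 (π₀ (cell (⇑f) P a)).toReal) / j) - h|), cell (⇑f) P a := by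
    intro j
    ext x
    simp only [hB, Set.mem_setOf_eq, Set.mem_iUnion, exists_prop]
    constructor
    · intro hx
      obtain ⟨a, hxa⟩ := exists_itin (f := ⇑f) hP j x
      rw [cellOf_eq_cell hP hxa] at hx
      exact ⟨a, hx, hxa⟩
    · rintro ⟨a, ha, hxa⟩
      rwa [cellOf_eq_cell hP hxa]
  have hBmeas : ∀ j, MeasurableSet (B j) := by
    intro j
    rw [hBeq j]
    exact MeasurableSet.iUnion fun a => MeasurableSet.iUnion fun _ => hcellMeas a
  set C : ℕ → Set X := fun j => (⇑f)^[τ j] ⁻¹' (B j) with hC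
  have hmeasC : ∀ j, π₀ (C j) = π₀ (B j) := fun j =>
    (hinv.iterate (τ j)).measure_preimage (hBmeas j).nullMeasurableSet
  -- null sets of zero-measure cells
  set N : ℕ → Set X := fun j =>
    ⋃ (a : Fin j → Fin r) (_ : π₀ (cell (⇑f) P a) = 0), cell (⇑f) P a with hN
  have hNnull : ∀ j, π₀ (N j) = 0 := fun j =>
    measure_iUnion_null fun a => measure_iUnion_null fun ha => ha
  have hNmeas : ∀ j, MeasurableSet (N j) := fun j =>
    MeasurableSet.iUnion fun a => MeasurableSet.iUnion fun _ => hcellMeas a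
  set D : ℕ → Set X := fun j => (⇑f)^[τ j] ⁻¹' (N j) with hD
  have hDnull : ∀ j, π₀ (D j) = 0 := fun j => by
    rw [hD]
    rw [(hinv.iterate (τ j)).measure_preimage (hNmeas j).nullMeasurableSet]
    exact hNnull j
  -- Borel–Cantelli
  have hsum' : (∑' j, π₀ (C j)) ≠ ⊤ := by
    rw [tsum_congr hmeasC]
    exact hsum.ne
  have hBC : π₀ {x | ¬ ∀ᶠ j in atTop, x ∉ C j} = 0 := ae_eventually_notMem hsum'
  set bad : Set X := {x | ¬ ∀ᶠ j in atTop, x ∉ C j} ∪ ⋃ j, D j with hbad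
  have hbadnull : π₀ bad = 0 :=
    measure_union_null hBC (measure_iUnion_null hDnull)
  set S : Set X := {x | ∃ j₀ : ℕ, ∀ j, j₀ ≤ j → ∃ a : Fin j → Fin r,
      inSigma π₀ (⇑f) P h δ j a ∧ (⇑f)^[j * (j + 1) / 2] x ∈ cell (⇑f) P a} with hS
  have hsub : (Set.univ : Set X) ⊆ S ∪ bad := by
    intro x _
    by_cases hxb : x ∈ bad
    · exact Or.inr hxb
    refine Or.inl ?_
    rw [hbad, Set.mem_union, not_or] at hxb
    obtain ⟨hx1, hx2⟩ := hxb
    rw [Set.mem_setOf_eq, not_not, eventually_atTop] at hx1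
    obtain ⟨N₀, hN₀⟩ := hx1
    rw [Set.mem_iUnion] at hx2
    push_neg at hx2
    refine ⟨max N₀ 1, fun j hj => ?_⟩
    have hj1 : 1 ≤ j := le_trans (le_max_right _ _) hj
    have hjpos : (0 : ℝ) < (j : ℝ) := by exact_mod_cast hj1
    have hjN : N₀ ≤ j := le_trans (le_max_left _ _) hj
    set y : X := (⇑f)^[τ j] x with hy
    obtain ⟨a, hya⟩ := exists_itin (f := ⇑f) hP j y
    refine ⟨a, ?_, hya⟩
    -- y ∉ B j
    have hyB : y ∉ B j := hN₀ j hjN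
    rw [hBeq j] at hyB
    simp only [Set.mem_iUnion, exists_prop, not_exists, not_and] at hyB
    have hcond : |(-(Real.logb 2 (π₀ (cell (⇑f) P a)).toReal) / j) - h| ≤ δ :=
      not_lt.mp fun hc => hyB a hc hya
    -- the cell has positive measure
    have hne0 : π₀ (cell (⇑f) P a) ≠ 0 := by
      intro h0
      apply hx2 j
      rw [hD, Set.mem_preimage, ← hy]
      rw [hN]
      exact Set.mem_iUnion.mpr ⟨a, Set.mem_iUnion.mpr ⟨h0, hya⟩⟩
    have hnetop : π₀ (cell (⇑f) P a) ≠ ⊤ := measure_ne_top _ _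
    set m : ℝ := (π₀ (cell (⇑f) P a)).toReal with hm
    have hmpos : 0 < m := ENNReal.toReal_pos hne0 hnetop
    have hmeq : π₀ (cell (⇑f) P a) = ENNReal.ofReal m := (ENNReal.ofReal_toReal hnetop).symm
    set L : ℝ := Real.logb 2 m with hL
    have hLm : (2 : ℝ) ^ L = m := Real.rpow_logb (by norm_num) (by norm_num) hmpos
    obtain ⟨h1, h2⟩ := abs_le.mp hcond
    have hLj : (-L / j) * j = -L := div_mul_cancel₀ _ hjpos.ne'
    have hlow : -(j : ℝ) * (h + δ) ≤ L := by nlinarith [mul_le_mul_of_nonneg_right h2 hjpos.le]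
    have hhigh : L ≤ -(j : ℝ) * (h - δ) := by nlinarith [mul_le_mul_of_nonneg_right h1 hjpos.le]
    constructor
    · rw [hmeq]
      refine ENNReal.ofReal_le_ofReal ?_
      calc (2 : ℝ) ^ (-(j : ℝ) * (h + δ)) ≤ (2 : ℝ) ^ L :=
            (Real.rpow_le_rpow_left_iff one_lt_two).mpr hlow
        _ = m := hLm
    · rw [hmeq]
      refine ENNReal.ofReal_le_ofReal ?_
      calc m = (2 : ℝ) ^ L := hLm.symm
        _ ≤ (2 : ℝ) ^ (-(j : ℝ) * (h - δ)) :=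
            (Real.rpow_le_rpow_left_iff one_lt_two).mpr hhigh
  -- conclude
  have h1 : (1 : ENNReal) ≤ π₀ S := by
    have := measure_mono (μ := π₀) hsub
    rw [measure_univ] at this
    calc (1 : ENNReal) ≤ π₀ (S ∪ bad) := this
      _ ≤ π₀ S + π₀ bad := measure_union_le _ _
      _ = π₀ S := by rw [hbadnull, add_zero]
  refine le_antisymm ?_ h1
  calc π₀ S ≤ π₀ Set.univ := measure_mono (Set.subset_univ _)
    _ = 1 := measure_univ
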